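/- arXiv:math/0112144 — 7 statements merged into one kernel-verified Lean document; each statement's English description precedes it below -/
import Mathlib

section
/- Let M be a topological space, E a real topological vector space, and ψ : M → E a continuous map. Suppose that (i) the range of ψ is a convex set, (ii) every fiber ψ⁻¹({u}) is preconnected, and (iii) the corestriction ψ : M → range ψ is an open map (where range ψ carries the subspace topology). Then ψ is convex, i.e., for all u, v in the range of ψ the preimage ψ⁻¹([u,v]) of the segment [u,v] is connected. -/
/-!
Over a point of the segment `[u, v]` the fiber of `ψ` is preconnected, so it cannot be split by a
separation of `ψ⁻¹([u, v])`; pushing such a separation forward by the open map `M → range ψ` would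
therefore separate the segment itself, which is convex and hence preconnected.
-/

open Set Topology

theorem IsPreconnected.preimage_of_isOpenMap_of_isPreconnected_fiber {α β : Type*}
    [TopologicalSpace α] [TopologicalSpace β] {f : α → β} {s : Set β} (hs : IsPreconnected s)
    (hf : IsOpenMap f) (hsf : s ⊆ range f) (hfib : ∀ y ∈ s, IsPreconnected (f ⁻¹' {y})) :
    IsPreconnected (f ⁻¹' s) := by
  rw [isPreconnected_iff_subset_of_disjoint]
  intro u v hu hv hsuv huv
  have fiber_subset : ∀ y ∈ s, f ⁻¹' {y} ⊆ u ∨ f ⁻¹' {y} ⊆ v := fun y hy ↦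
    isPreconnected_iff_subset_of_disjoint.mp (hfib y hy) u v hu hv
      (fun x hx ↦ hsuv (by simpa [(mem_singleton_iff.mp hx)] using hy))
      (eq_empty_of_forall_notMem fun x ⟨hx, hxuv⟩ ↦
        huv.subset ⟨by simpa [mem_singleton_iff.mp hx] using hy, hxuv⟩)
  have notMem_of_fiber_meets_u_and_v : ∀ x ∈ u, ∀ x' ∈ v, f x = f x' → f x ∉ s := by
    intro x hx x' hx' hxx' hs
    rcases fiber_subset (f x) hs with hfu | hfv
    · exact huv.subset ⟨show f x' ∈ s from hxx' ▸ hs, hfu hxx'.symm, hx'⟩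
    · exact huv.subset ⟨hs, hx, hfv rfl⟩
  have hsuv' : s ⊆ f '' u ∪ f '' v := fun y hy ↦ by
    obtain ⟨x, rfl⟩ := hsf hy
    exact (hsuv hy).imp (mem_image_of_mem f) (mem_image_of_mem f)
  have huv' : s ∩ (f '' u ∩ f '' v) = ∅ := by
    refine eq_empty_of_forall_notMem ?_
    rintro _ ⟨hy, ⟨x, hx, rfl⟩, x', hx', hxx'⟩
    exact notMem_of_fiber_meets_u_and_v x hx x' hx' hxx'.symm hy
  rcases isPreconnected_iff_subset_of_disjoint.mp hs _ _ (hf u hu) (hf v hv) hsuv' huv' with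
    hsu | hsv
  · refine Or.inl fun a ha ↦ ?_
    by_contra hau
    obtain ⟨x, hx, hxa⟩ := hsu ha
    exact notMem_of_fiber_meets_u_and_v x hx a ((hsuv ha).resolve_left hau) hxa (hxa ▸ ha)
  · refine Or.inr fun a ha ↦ ?_
    by_contra hav
    obtain ⟨x, hx, hxa⟩ := hsv ha
    exact notMem_of_fiber_meets_u_and_v a ((hsuv ha).resolve_right hav) x hx hxa.symm ha

theorem stmt0_general {M E : Type*} [TopologicalSpace M]
    [AddCommGroup E] [Module ℝ E] [TopologicalSpace E]
    [IsTopologicalAddGroup E] [ContinuousSMul ℝ E]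
    (ψ : M → E)
    (hconv : Convex ℝ (Set.range ψ))
    (hfib : ∀ u : E, IsPreconnected (ψ ⁻¹' {u}))
    (hopen : IsOpenMap (Set.rangeFactorization ψ)) :
    ∀ u ∈ Set.range ψ, ∀ v ∈ Set.range ψ,
      IsConnected (ψ ⁻¹' segment ℝ u v) := by
  intro u hu v hv
  have hseg : segment ℝ u v ⊆ range ψ := hconv.segment_subset hu hv
  have hseg_preconnected : IsPreconnected (Subtype.val ⁻¹' segment ℝ u v : Set (range ψ)) := by
    rw [← IsInducing.subtypeVal.isPreconnected_image, Subtype.image_preimage_coe,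
      inter_eq_right.mpr hseg]
    exact (convex_segment u v).isPreconnected
  refine ⟨Nonempty.preimage' ⟨u, left_mem_segment ℝ u v⟩ hseg,
    hseg_preconnected.preimage_of_isOpenMap_of_isPreconnected_fiber hopen
      (by simp) fun y _ ↦ ?_⟩
  convert hfib y using 1
  ext x
  exact rangeFactorization_eq_iff x y

/-- If `ψ : M → E` is continuous with convex range, preconnected fibers,
and open corestriction onto its range, then `ψ` is convex: the preimage of every
segment between points of the range is connected. -/
theorem stmt0 {M E : Type*} [TopologicalSpace M]
    [AddCommGroup E] [Module ℝ E] [TopologicalSpace E]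
    [IsTopologicalAddGroup E] [ContinuousSMul ℝ E]
    (ψ : M → E) (hcont : Continuous ψ)
    (hconv : Convex ℝ (Set.range ψ))
    (hfib : ∀ u : E, IsPreconnected (ψ ⁻¹' {u}))
    (hopen : IsOpenMap (Set.rangeFactorization ψ)) :
    ∀ u ∈ Set.range ψ, ∀ v ∈ Set.range ψ,
      IsConnected (ψ ⁻¹' segment ℝ u v) :=
  stmt0_general ψ hconv hfib hopen
end

section
/- Let M be a topological space, E a real topological vector space, and ψ : M → E a map. Then ψ is convex if and only if for every convex subset B ⊆ E the preimage ψ⁻¹(B) is preconnected. -/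
theorem stmt1_general {M E : Type*} [TopologicalSpace M]
    [AddCommGroup E] [Module ℝ E]
    (ψ : M → E) :
    (∀ u ∈ Set.range ψ, ∀ v ∈ Set.range ψ,
        IsConnected (ψ ⁻¹' segment ℝ u v)) ↔
      (∀ B : Set E, Convex ℝ B → IsPreconnected (ψ ⁻¹' B)) := by
  constructor
  · intro hψ B hB
    refine isPreconnected_of_forall_pair fun x hx y hy => ?_
    exact ⟨ψ ⁻¹' segment ℝ (ψ x) (ψ y), Set.preimage_mono (hB.segment_subset hx hy),
      left_mem_segment ℝ _ _, right_mem_segment ℝ _ _,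
      (hψ _ ⟨x, rfl⟩ _ ⟨y, rfl⟩).isPreconnected⟩
  · rintro h _ ⟨x, rfl⟩ _ ⟨y, rfl⟩
    exact ⟨⟨x, left_mem_segment ℝ _ _⟩, h _ (convex_segment _ _)⟩

/-- A map `ψ : M → E` is convex (preimages of segments between points of
the range are connected) if and only if the preimage of every convex subset of `E`
is preconnected. -/
theorem stmt1 {M E : Type*} [TopologicalSpace M]
    [AddCommGroup E] [Module ℝ E] [TopologicalSpace E]
    [IsTopologicalAddGroup E] [ContinuousSMul ℝ E]
    (ψ : M → E) :
    (∀ u ∈ Set.range ψ, ∀ v ∈ Set.range ψ,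
        IsConnected (ψ ⁻¹' segment ℝ u v)) ↔
      (∀ B : Set E, Convex ℝ B → IsPreconnected (ψ ⁻¹' B)) :=
  stmt1_general ψ
end

section
/- Let M = {(x, L) ∈ ℝ² × P(ℝ²) : x ∈ L} be the real blow-up of ℝ² at the origin, equipped with the subspace topology from ℝ² × P(ℝ²), and let ψ : M → ℝ² be the first projection, ψ(x, L) = x. Then for all u, v ∈ ℝ², the preimage ψ⁻¹([u,v]) of the segment [u,v] is connected. -/
/-- The quotient topology on the real projective line `P(ℝ²)`. -/
noncomputable instance : TopologicalSpace (Projectivization ℝ (ℝ × ℝ)) :=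
  inferInstanceAs (TopologicalSpace (Quotient (projectivizationSetoid ℝ (ℝ × ℝ))))

/-- The real blow-up of `ℝ²` at the origin: pairs `(x, L)` with `x ∈ L`,
topologized as a subspace of `ℝ² × P(ℝ²)`. -/
def BlowUp : Type :=
  { p : (ℝ × ℝ) × Projectivization ℝ (ℝ × ℝ) // p.1 ∈ p.2.submodule }

noncomputable instance : TopologicalSpace BlowUp :=
  inferInstanceAs (TopologicalSpace
    { p : (ℝ × ℝ) × Projectivization ℝ (ℝ × ℝ) // p.1 ∈ p.2.submodule })

/-- The blow-down map `ψ : M → ℝ²`, the first projection. -/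
def blowDown (p : BlowUp) : ℝ × ℝ := p.1.1

/-!
Away from the origin, `ψ` has the continuous section `x ↦ (x, ℝ·x)`, so the preimage of a
connected set avoiding `0` is connected. The fibre over `0` is a copy of the connected space
`P(ℝ²)`, and if the set is star-shaped about `0`, every point `(x, L)` of its preimage is joined
to that fibre by the path `t ↦ (t • x, L)`, `t ∈ [0, 1]`, which stays in the preimage.
A segment is convex, so one of the two cases applies.
-/

open Set Projectivization

lemma Projectivization.continuous_mk' :
    Continuous (mk' ℝ : {v : ℝ × ℝ // v ≠ 0} → Projectivization ℝ (ℝ × ℝ)) :=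
  continuous_quot_mk

lemma Projectivization.mk'_surjective :
    Function.Surjective (mk' ℝ : {v : ℝ × ℝ // v ≠ 0} → Projectivization ℝ (ℝ × ℝ)) :=
  fun L => ⟨⟨L.rep, L.rep_nonzero⟩, L.mk_rep⟩

instance : ConnectedSpace {v : ℝ × ℝ // v ≠ 0} :=
  Subtype.connectedSpace (isConnected_compl_singleton_of_one_lt_rank (by norm_num) 0)

instance : ConnectedSpace (Projectivization ℝ (ℝ × ℝ)) :=
  mk'_surjective.connectedSpace continuous_mk'

lemma Projectivization.mk_eq_of_mem_submodule {K V : Type*} [DivisionRing K] [AddCommGroup V]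
    [Module K V] {x : V} (hx : x ≠ 0) {L : Projectivization K V} (h : x ∈ L.submodule) : mk K x hx = L :=
  submodule_injective <| Submodule.eq_of_le_of_finrank_eq
    (by simpa [submodule_mk] using h) (by simp only [finrank_submodule])

namespace BlowUp

def ofLine (L : Projectivization ℝ (ℝ × ℝ)) : BlowUp :=
  ⟨(0, L), L.submodule.zero_mem⟩

noncomputable def ofNonzero (v : {v : ℝ × ℝ // v ≠ 0}) : BlowUp :=
  ⟨(v.1, mk' ℝ v), by simp [mk'_eq_mk, submodule_mk, Submodule.mem_span_singleton_self]⟩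

def scale (t : ℝ) (p : BlowUp) : BlowUp :=
  ⟨(t • p.1.1, p.1.2), p.1.2.submodule.smul_mem t p.2⟩

lemma continuous_ofLine : Continuous ofLine :=
  (continuous_const.prodMk continuous_id).subtype_mk _

lemma continuous_ofNonzero : Continuous ofNonzero :=
  (continuous_subtype_val.prodMk continuous_mk').subtype_mk _

lemma continuous_scale (p : BlowUp) : Continuous fun t : ℝ => scale t p :=
  ((continuous_id.smul continuous_const).prodMk continuous_const).subtype_mk _

lemma scale_zero (p : BlowUp) : scale 0 p = ofLine p.1.2 :=
  Subtype.ext (by simp [scale, ofLine])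

lemma scale_one (p : BlowUp) : scale 1 p = p :=
  Subtype.ext (by simp [scale])

lemma eq_ofNonzero (p : BlowUp) (hp : blowDown p ≠ 0) : p = ofNonzero ⟨blowDown p, hp⟩ :=
  Subtype.ext (Prod.ext rfl (mk_eq_of_mem_submodule hp p.2).symm)

lemma isPreconnected_range_ofLine : IsPreconnected (range ofLine) :=
  isPreconnected_range continuous_ofLine

end BlowUp

open BlowUp

lemma blowDown_surjective : Function.Surjective blowDown := by
  intro x
  by_cases hx : x = 0
  · exact ⟨ofLine (Classical.arbitrary _), hx.symm⟩
  · exact ⟨ofNonzero ⟨x, hx⟩, rfl⟩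

lemma isPreconnected_preimage_blowDown_of_zero_notMem {s : Set (ℝ × ℝ)}
    (hs : IsPreconnected s) (h0 : (0 : ℝ × ℝ) ∉ s) : IsPreconnected (blowDown ⁻¹' s) := by
  have hs' : IsPreconnected (Subtype.val ⁻¹' s : Set {v : ℝ × ℝ // v ≠ 0}) := by
    rw [← Topology.IsEmbedding.subtypeVal.isInducing.isPreconnected_image,
      image_preimage_eq_of_subset fun x hx => ⟨⟨x, fun h => h0 (h ▸ hx)⟩, rfl⟩]
    exact hs
  have hpre : blowDown ⁻¹' s = ofNonzero '' (Subtype.val ⁻¹' s) := by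
    refine Subset.antisymm (fun p hp => ?_) (image_subset_iff.mpr fun v hv => hv)
    have hp0 : blowDown p ≠ 0 := fun h => h0 (h ▸ hp)
    exact ⟨_, hp, (eq_ofNonzero p hp0).symm⟩
  rw [hpre]
  exact hs'.image _ continuous_ofNonzero.continuousOn

lemma isPreconnected_preimage_blowDown_of_starConvex {s : Set (ℝ × ℝ)}
    (hs : StarConvex ℝ 0 s) : IsPreconnected (blowDown ⁻¹' s) := by
  refine isPreconnected_of_forall (ofLine (Classical.arbitrary _)) fun p hp => ?_
  have h0 : (0 : ℝ × ℝ) ∈ s := hs.mem ⟨_, hp⟩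
  have hray : (fun t => scale t p) '' Icc 0 1 ⊆ blowDown ⁻¹' s := by
    rintro _ ⟨t, ht, rfl⟩
    exact hs.smul_mem hp ht.1 ht.2
  refine ⟨range ofLine ∪ (fun t => scale t p) '' Icc 0 1,
    union_subset (range_subset_iff.mpr fun _ => h0) hray,
    Or.inl (mem_range_self _), Or.inr ⟨1, right_mem_Icc.mpr zero_le_one, scale_one p⟩, ?_⟩
  exact isPreconnected_range_ofLine.union (ofLine p.1.2) (mem_range_self _)
    ⟨0, left_mem_Icc.mpr zero_le_one, scale_zero p⟩
    (isPreconnected_Icc.image _ (continuous_scale p).continuousOn)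

lemma isConnected_preimage_blowDown_of_convex {s : Set (ℝ × ℝ)} (hs : Convex ℝ s)
    (hne : s.Nonempty) : IsConnected (blowDown ⁻¹' s) := by
  refine ⟨hne.preimage blowDown_surjective, ?_⟩
  by_cases h0 : (0 : ℝ × ℝ) ∈ s
  · exact isPreconnected_preimage_blowDown_of_starConvex (hs.starConvex h0)
  · exact isPreconnected_preimage_blowDown_of_zero_notMem hs.isPreconnected h0

/-- For the real blow-up `M` of `ℝ²` at the origin and the first
projection `ψ : M → ℝ²`, the preimage of every segment `[u,v]` is connected. -/
theorem stmt4 :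
    ∀ u v : ℝ × ℝ, IsConnected (blowDown ⁻¹' segment ℝ u v) :=
  fun u v => isConnected_preimage_blowDown_of_convex (convex_segment u v)
    ⟨u, left_mem_segment ℝ u v⟩
end

section
/- Let M = {(x, L) ∈ ℝ² × P(ℝ²) : x ∈ L} be the real blow-up of ℝ² at the origin, let L₀ ∈ P(ℝ²) be the line spanned by (1,0), and let M' = M \ {((0,0), L₀)} with the subspace topology; let ψ : M' → ℝ² be the first projection. Then ψ is surjective and every fiber of ψ is connected, but the preimage ψ⁻¹([u,v]) of the segment from u = (−1, 0) to v = (1, 0) is not connected. -/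
/-- The line `L₀ ∈ P(ℝ²)` spanned by `(1, 0)`. -/
noncomputable def L₀ : Projectivization ℝ (ℝ × ℝ) :=
  Projectivization.mk ℝ ((1 : ℝ), (0 : ℝ)) (by simp)

/-- The real blow-up of `ℝ²` at the origin with the point `((0,0), L₀)` removed,
topologized as a subspace of `ℝ² × P(ℝ²)`. -/
def BlowUpMinus : Type :=
  { p : (ℝ × ℝ) × Projectivization ℝ (ℝ × ℝ) //
      p.1 ∈ p.2.submodule ∧ p ≠ (((0 : ℝ), (0 : ℝ)), L₀) }

noncomputable instance : TopologicalSpace BlowUpMinus :=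
  inferInstanceAs (TopologicalSpace
    { p : (ℝ × ℝ) × Projectivization ℝ (ℝ × ℝ) //
        p.1 ∈ p.2.submodule ∧ p ≠ (((0 : ℝ), (0 : ℝ)), L₀) })

/-- The first projection `ψ : M' → ℝ²`. -/
def blowDownMinus (p : BlowUpMinus) : ℝ × ℝ := p.1.1

/-!
Away from the origin a point of `ℝ²` lies on exactly one line, so the fibres of `ψ` there are
points; the fibre over the origin is `P(ℝ²) ∖ {L₀} ≅ ℝ`, parametrised by `t ↦ [t : 1]`.
Over the segment on the `x`-axis, however, the points with `x > 0` form a clopen piece: its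
closure could only add `((0,0), L₀)`, which has been removed, while the points over `0` lie on
lines `L ≠ L₀`, an open condition since `{L₀}` is closed.
-/

open scoped LinearAlgebra.Projectivization

namespace Projectivization

variable {K V : Type*} [DivisionRing K] [AddCommGroup V] [Module K V]

theorem mk_eq_iff_mem_submodule {L : ℙ K V} {v : V} (hv : v ≠ 0) :
    mk K v hv = L ↔ v ∈ L.submodule := by
  induction L using Projectivization.ind with
  | h w hw =>
    rw [submodule_mk, Submodule.mem_span_singleton, mk_eq_mk_iff' K v w hv hw]

theorem mem_submodule_mk_self (v : V) (hv : v ≠ 0) : v ∈ (mk K v hv).submodule :=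
  (mk_eq_iff_mem_submodule hv).mp rfl

theorem eq_mk_of_mem_submodule {L : ℙ K V} {v : V} (hv : v ≠ 0) (h : v ∈ L.submodule) :
    L = mk K v hv :=
  ((mk_eq_iff_mem_submodule hv).mpr h).symm

end Projectivization

open Projectivization

theorem continuous_projectivization_mk {X : Type*} [TopologicalSpace X] {f : X → ℝ × ℝ}
    (hf : Continuous f) (hf0 : ∀ x, f x ≠ 0) :
    Continuous fun x => mk ℝ (f x) (hf0 x) :=
  continuous_quot_mk.comp (hf.subtype_mk hf0)

theorem mem_submodule_L₀_iff {x : ℝ × ℝ} : x ∈ L₀.submodule ↔ x.2 = 0 := by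
  rw [L₀, submodule_mk, Submodule.mem_span_singleton]
  constructor
  · rintro ⟨a, rfl⟩
    simp
  · intro hx
    exact ⟨x.1, Prod.ext (by simp) (by simp [hx])⟩

theorem isClosed_singleton_L₀ : IsClosed ({L₀} : Set (ℙ ℝ (ℝ × ℝ))) := by
  have hq : Topology.IsQuotientMap (fun w : {v : ℝ × ℝ // v ≠ 0} => mk ℝ w.1 w.2) :=
    isQuotientMap_quot_mk
  refine hq.isClosed_preimage.mp ?_
  have hpre :
      (fun w : {v : ℝ × ℝ // v ≠ 0} => mk ℝ w.1 w.2) ⁻¹' {L₀} = {w | w.1.2 = 0} := by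
    ext w
    exact (mk_eq_iff_mem_submodule w.2).trans mem_submodule_L₀_iff
  rw [hpre]
  exact isClosed_eq continuous_subtype_val.snd continuous_const

theorem exists_eq_mk_of_ne_L₀ {L : ℙ ℝ (ℝ × ℝ)} (hL : L ≠ L₀) :
    ∃ t : ℝ, L = mk ℝ (t, 1) (by simp) := by
  induction L using Projectivization.ind with
  | h v hv =>
    have hv2 : v.2 ≠ 0 := fun h =>
      hL ((mk_eq_iff_mem_submodule hv).mpr (mem_submodule_L₀_iff.mpr h))
    refine ⟨v.1 / v.2, (mk_eq_mk_iff' ℝ _ _ hv _).mpr ⟨v.2, Prod.ext ?_ ?_⟩⟩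
    · simp [mul_div_cancel₀ _ hv2]
    · simp

namespace BlowUpMinus

theorem snd_eq_L₀_of_fst_snd_eq_zero (p : BlowUpMinus) (h : p.1.1.2 = 0) (h1 : p.1.1.1 ≠ 0) :
    p.1.2 = L₀ := by
  have hne : p.1.1 ≠ 0 := fun h0 => h1 (by rw [h0]; rfl)
  rw [eq_mk_of_mem_submodule hne p.2.1, mk_eq_iff_mem_submodule]
  exact mem_submodule_L₀_iff.mpr h

theorem snd_ne_L₀_of_fst_eq_zero (p : BlowUpMinus) (h : p.1.1 = 0) : p.1.2 ≠ L₀ :=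
  fun hL => p.2.2 (Prod.ext h hL)

noncomputable def onL₀ (t : ℝ) (ht : t ≠ 0) : BlowUpMinus :=
  ⟨((t, 0), L₀), mem_submodule_L₀_iff.mpr rfl, fun h => ht (congrArg (·.1.1) h)⟩

noncomputable def overOrigin (t : ℝ) : BlowUpMinus :=
  ⟨((0, 0), mk ℝ (t, 1) (by simp)), zero_mem _, fun h => by
    have := mem_submodule_L₀_iff.mp ((mk_eq_iff_mem_submodule _).mp (congrArg Prod.snd h))
    norm_num at this⟩

theorem continuous_overOrigin : Continuous overOrigin :=
  (continuous_const.prodMk (continuous_projectivization_mk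
    (continuous_id.prodMk continuous_const) _)).subtype_mk _

end BlowUpMinus

open BlowUpMinus

theorem blowDownMinus_preimage_zero : blowDownMinus ⁻¹' {0} = Set.range overOrigin := by
  ext p
  constructor
  · intro hp
    obtain ⟨t, ht⟩ := exists_eq_mk_of_ne_L₀ (snd_ne_L₀_of_fst_eq_zero p hp)
    exact ⟨t, Subtype.ext (Prod.ext (Eq.symm hp) ht.symm)⟩
  · rintro ⟨t, rfl⟩
    rfl

theorem blowDownMinus_preimage_of_ne_zero {u : ℝ × ℝ} (hu : u ≠ 0) :
    blowDownMinus ⁻¹' {u} =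
      {⟨(u, mk ℝ u hu), mem_submodule_mk_self u hu, fun h => hu (congrArg Prod.fst h)⟩} := by
  ext p
  constructor
  · intro hp
    have hp1 : p.1.1 = u := hp
    exact Subtype.ext (Prod.ext hp1 (eq_mk_of_mem_submodule hu (hp1 ▸ p.2.1)))
  · rintro rfl
    rfl

theorem isConnected_blowDownMinus_preimage_singleton (u : ℝ × ℝ) :
    IsConnected (blowDownMinus ⁻¹' {u}) := by
  by_cases hu : u = 0
  · subst hu
    rw [blowDownMinus_preimage_zero]
    exact isConnected_range continuous_overOrigin
  · rw [blowDownMinus_preimage_of_ne_zero hu]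
    exact isConnected_singleton

theorem snd_eq_zero_of_mem_segment {x : ℝ × ℝ}
    (hx : x ∈ segment ℝ ((-1 : ℝ), (0 : ℝ)) ((1 : ℝ), (0 : ℝ))) : x.2 = 0 := by
  obtain ⟨a, b, -, -, -, rfl⟩ := hx
  simp

theorem not_isPreconnected_blowDownMinus_preimage_segment :
    ¬ IsPreconnected
      (blowDownMinus ⁻¹' segment ℝ ((-1 : ℝ), (0 : ℝ)) ((1 : ℝ), (0 : ℝ))) := by
  intro hconn
  set U : Set BlowUpMinus := {p | 0 < p.1.1.1}
  set V : Set BlowUpMinus := {p | p.1.1.1 < 0} ∪ {p | p.1.2 ≠ L₀}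
  have hU : IsOpen U := isOpen_lt continuous_const continuous_subtype_val.fst.fst
  have hV : IsOpen V :=
    (isOpen_lt continuous_subtype_val.fst.fst continuous_const).union
      (isClosed_singleton_L₀.isOpen_compl.preimage continuous_subtype_val.snd)
  have hcover : blowDownMinus ⁻¹' segment ℝ (-1, 0) (1, 0) ⊆ U ∪ V := by
    intro p hp
    rcases lt_trichotomy p.1.1.1 0 with h | h | h
    · exact Or.inr (Or.inl h)
    · exact Or.inr (Or.inr (snd_ne_L₀_of_fst_eq_zero p
        (Prod.ext h (snd_eq_zero_of_mem_segment hp))))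
    · exact Or.inl h
  obtain ⟨p, hpS, hpU, hpV⟩ := hconn U V hU hV hcover
    ⟨onL₀ 1 one_ne_zero, right_mem_segment ℝ _ _, (by show (0 : ℝ) < 1; norm_num)⟩
    ⟨onL₀ (-1) (by norm_num), left_mem_segment ℝ _ _,
      Or.inl (by show (-1 : ℝ) < 0; norm_num)⟩
  have hpU : 0 < p.1.1.1 := hpU
  rcases hpV with hneg | hL
  · exact (lt_asymm hpU hneg).elim
  · exact hL (snd_eq_L₀_of_fst_snd_eq_zero p (snd_eq_zero_of_mem_segment hpS) hpU.ne')

/-- For the punctured blow-up `M'` and the first projection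
`ψ : M' → ℝ²`: `ψ` is surjective and has connected fibers, but the preimage of the
segment from `(-1, 0)` to `(1, 0)` is not connected. -/
theorem stmt6 :
    Function.Surjective blowDownMinus ∧
      (∀ u : ℝ × ℝ, IsConnected (blowDownMinus ⁻¹' {u})) ∧
      ¬ IsConnected
        (blowDownMinus ⁻¹' segment ℝ ((-1 : ℝ), (0 : ℝ)) ((1 : ℝ), (0 : ℝ))) :=
  ⟨fun u => (isConnected_blowDownMinus_preimage_singleton u).nonempty,
    isConnected_blowDownMinus_preimage_singleton,
    fun h => not_isPreconnected_blowDownMinus_preimage_segment h.isPreconnected⟩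
end

section
/- Let M be a topological space, E a real topological vector space, ψ : M → E a continuous map admitting a local cone structure C, and suppose every fiber of ψ is preconnected. Then for every open subset U ⊆ M, the saturation ψ⁻¹(ψ(U)) is open in M. -/
open Topology

/-- A local cone structure for a continuous map `ψ : M → E`: an assignment of a
closed subset `C x ⊆ E` to each `x ∈ M` such that (S1) every neighborhood of `x`
contains an open neighborhood `U` of `x` with `ψ '' U ⊆ C x` and `ψ '' U` a
neighborhood of `ψ x` in `C x` (subspace topology), and (S2) `C` is constant on
connected components of fibers of `ψ`. -/
structure IsLocalConeStructure {M E : Type*} [TopologicalSpace M] [TopologicalSpace E]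
    (ψ : M → E) (C : M → Set E) : Prop where
  isClosed : ∀ x : M, IsClosed (C x)
  locally : ∀ x : M, ∀ V ∈ 𝓝 x, ∃ U : Set M, IsOpen U ∧ x ∈ U ∧ U ⊆ V ∧
      ψ '' U ⊆ C x ∧ ψ '' U ∈ 𝓝[C x] (ψ x)
  fiberCompat : ∀ x y : M, y ∈ connectedComponentIn (ψ ⁻¹' {ψ x}) x → C x = C y

open Filter

/-!
Near any point `y`, `ψ` lands in `C y`, so `ψ` tends to `𝓝[C y] (ψ y)`. If `x ∈ U` and
`ψ y = ψ x`, preconnectedness of the fiber gives `C y = C x`, and (S1) makes `ψ '' U` a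
neighborhood of `ψ y` in that cone; pulling it back shows `ψ⁻¹(ψ(U)) ∈ 𝓝 y`.
-/

namespace IsLocalConeStructure

variable {M E : Type*} [TopologicalSpace M] [TopologicalSpace E] {ψ : M → E} {C : M → Set E}

theorem cone_eq_of_apply_eq (hC : IsLocalConeStructure ψ C) {x y : M}
    (hfib : IsPreconnected (ψ ⁻¹' {ψ x})) (hxy : ψ x = ψ y) : C x = C y :=
  hC.fiberCompat x y <|
    hfib.subset_connectedComponentIn rfl subset_rfl (by simp [hxy])

theorem image_mem_nhdsWithin (hC : IsLocalConeStructure ψ C) {U : Set M} {x : M}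
    (hU : IsOpen U) (hx : x ∈ U) : ψ '' U ∈ 𝓝[C x] (ψ x) := by
  obtain ⟨V, -, -, hVU, -, hV⟩ := hC.locally x U (hU.mem_nhds hx)
  exact mem_of_superset hV (Set.image_mono hVU)

theorem eventually_mem (hC : IsLocalConeStructure ψ C) (x : M) :
    ∀ᶠ z in 𝓝 x, ψ z ∈ C x := by
  obtain ⟨V, hV, hxV, -, hVC, -⟩ := hC.locally x Set.univ univ_mem
  filter_upwards [hV.mem_nhds hxV] with z hz using hVC (Set.mem_image_of_mem ψ hz)

theorem tendsto_nhdsWithin (hC : IsLocalConeStructure ψ C) {x : M} (hψ : ContinuousAt ψ x) :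
    Tendsto ψ (𝓝 x) (𝓝[C x] (ψ x)) :=
  tendsto_nhdsWithin_iff.2 ⟨hψ, hC.eventually_mem x⟩

end IsLocalConeStructure

theorem stmt10_general {M E : Type*} [TopologicalSpace M]
    [TopologicalSpace E]
    (ψ : M → E) (C : M → Set E)
    (hcont : Continuous ψ) (hC : IsLocalConeStructure ψ C)
    (hfib : ∀ u : E, IsPreconnected (ψ ⁻¹' {u})) :
    ∀ U : Set M, IsOpen U → IsOpen (ψ ⁻¹' (ψ '' U)) := by
  intro U hU
  refine isOpen_iff_mem_nhds.2 ?_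
  rintro y ⟨x, hxU, hxy⟩
  have hnhds : ψ '' U ∈ 𝓝[C y] (ψ y) := by
    rw [← hC.cone_eq_of_apply_eq (hfib _) hxy, ← hxy]
    exact hC.image_mem_nhdsWithin hU hxU
  exact hC.tendsto_nhdsWithin hcont.continuousAt hnhds

/-- If `ψ : M → E` is continuous, admits a local cone structure, and
has preconnected fibers, then the saturation `ψ⁻¹(ψ(U))` of every open set `U` is
open. -/
theorem stmt10 {M E : Type*} [TopologicalSpace M]
    [AddCommGroup E] [Module ℝ E] [TopologicalSpace E]
    [IsTopologicalAddGroup E] [ContinuousSMul ℝ E]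
    (ψ : M → E) (C : M → Set E)
    (hcont : Continuous ψ) (hC : IsLocalConeStructure ψ C)
    (hfib : ∀ u : E, IsPreconnected (ψ ⁻¹' {u})) :
    ∀ U : Set M, IsOpen U → IsOpen (ψ ⁻¹' (ψ '' U)) :=
  stmt10_general ψ C hcont hC hfib
end

section
/- Let M be a topological space, E a real topological vector space, and ψ : M → E a continuous map admitting a local cone structure C. Suppose every fiber of ψ is preconnected, and suppose that for every u in the range of ψ and every neighborhood W of u in E there is a neighborhood B ⊆ W of u in E such that ψ⁻¹(B) is preconnected. Then the corestriction ψ : M → range ψ is an open map (where range ψ carries the subspace topology). -/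
open Topology

theorem isOpenMap_rangeFactorization_of_image_mem_nhdsWithin {X Y : Type*}
    [TopologicalSpace X] [TopologicalSpace Y] {f : X → Y}
    (h : ∀ x, ∀ s ∈ 𝓝 x, f '' s ∈ 𝓝[Set.range f] (f x)) :
    IsOpenMap (Set.rangeFactorization f) := by
  refine IsOpenMap.of_nhds_le fun x s hs => ?_
  rw [nhds_subtype_eq_comap]
  obtain ⟨t, ht, hts⟩ := mem_nhdsWithin_iff_exists_mem_nhds_inter.mp (h x _ hs)
  refine ⟨t, ht, fun y hy => ?_⟩
  obtain ⟨z, hzs, hz⟩ := hts ⟨hy, y.2⟩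
  exact (Subtype.ext hz : Set.rangeFactorization f z = y) ▸ hzs

namespace IsLocalConeStructure

variable {M E : Type*} [TopologicalSpace M] [TopologicalSpace E] {ψ : M → E} {C : M → Set E}

theorem eq_of_apply_eq (hC : IsLocalConeStructure ψ C)
    (hfib : ∀ u : E, IsPreconnected (ψ ⁻¹' {u})) {x y : M} (h : ψ x = ψ y) : C x = C y :=
  hC.fiberCompat x y <| by
    rw [(hfib (ψ x)).connectedComponentIn rfl]
    exact h.symm

theorem isOpen_preimage_image (hC : IsLocalConeStructure ψ C) (hcont : Continuous ψ)
    (hfib : ∀ u : E, IsPreconnected (ψ ⁻¹' {u})) {U : Set M} (hU : IsOpen U) :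
    IsOpen (ψ ⁻¹' (ψ '' U)) := by
  refine isOpen_iff_mem_nhds.mpr ?_
  rintro y ⟨y', hy'U, hy'⟩
  obtain ⟨U', -, -, hU'U, -, hU'nhds⟩ := hC.locally y' U (hU.mem_nhds hy'U)
  obtain ⟨V, hVo, hyV, -, hVC, -⟩ := hC.locally y Set.univ Filter.univ_mem
  have hnear : ∀ᶠ v in 𝓝 (ψ y), v ∈ C y' → v ∈ ψ '' U' := by
    rw [← hy']
    exact eventually_nhdsWithin_iff.mp hU'nhds
  -- Near `y`, `ψ` takes values in `C y = C y'`, where `ψ '' U'` is a neighbourhood of `ψ y`.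
  filter_upwards [hcont.continuousAt.eventually hnear, hVo.mem_nhds hyV] with z hz hzV
  have hzC : ψ z ∈ C y' := hC.eq_of_apply_eq hfib hy' ▸ hVC ⟨z, hzV, rfl⟩
  exact Set.image_mono hU'U (hz hzC)

theorem image_mem_nhdsWithin_range (hC : IsLocalConeStructure ψ C) (hcont : Continuous ψ)
    (hfib : ∀ u : E, IsPreconnected (ψ ⁻¹' {u})) {x : M}
    (hsmall : ∀ W ∈ 𝓝 (ψ x), ∃ B ∈ 𝓝 (ψ x), B ⊆ W ∧ IsPreconnected (ψ ⁻¹' B))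
    {U : Set M} (hU : U ∈ 𝓝 x) : ψ '' U ∈ 𝓝[Set.range ψ] (ψ x) := by
  obtain ⟨U', hU'o, hxU', hU'U, hU'C, hU'nhds⟩ := hC.locally x U hU
  obtain ⟨W, hW, hWC⟩ := mem_nhdsWithin_iff_exists_mem_nhds_inter.mp hU'nhds
  obtain ⟨B, hB, hBW, hBpc⟩ := hsmall W hW
  have hcover : ψ ⁻¹' B ⊆ ψ ⁻¹' (ψ '' U') ∪ (ψ ⁻¹' C x)ᶜ := fun y hyB =>
    (em (ψ y ∈ C x)).imp (fun hyC => hWC ⟨hBW hyB, hyC⟩) id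
  have hdisj : Disjoint (ψ ⁻¹' (ψ '' U')) (ψ ⁻¹' C x)ᶜ :=
    Set.disjoint_compl_right_iff_subset.mpr (Set.preimage_mono hU'C)
  have hBU' : ψ ⁻¹' B ⊆ ψ ⁻¹' (ψ '' U') :=
    hBpc.subset_left_of_subset_union (hC.isOpen_preimage_image hcont hfib hU'o)
      ((hC.isClosed x).preimage hcont).isOpen_compl hdisj hcover
      ⟨x, (mem_of_mem_nhds hB : ψ x ∈ B), x, hxU', rfl⟩
  refine mem_nhdsWithin_iff_exists_mem_nhds_inter.mpr ⟨B, hB, ?_⟩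
  rintro _ ⟨hyB, y, rfl⟩
  exact Set.image_mono hU'U (hBU' hyB)

end IsLocalConeStructure

theorem stmt11_general {M E : Type*} [TopologicalSpace M]
    [TopologicalSpace E]
    (ψ : M → E) (C : M → Set E)
    (hcont : Continuous ψ) (hC : IsLocalConeStructure ψ C)
    (hfib : ∀ u : E, IsPreconnected (ψ ⁻¹' {u}))
    (hsmall : ∀ u ∈ Set.range ψ, ∀ W ∈ 𝓝 u,
      ∃ B ∈ 𝓝 u, B ⊆ W ∧ IsPreconnected (ψ ⁻¹' B)) :
    IsOpenMap (Set.rangeFactorization ψ) :=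
  isOpenMap_rangeFactorization_of_image_mem_nhdsWithin fun x _ hU =>
    hC.image_mem_nhdsWithin_range hcont hfib (hsmall (ψ x) ⟨x, rfl⟩) hU

/-- If `ψ : M → E` is continuous, admits a local cone structure, has
preconnected fibers, and every point of the range has arbitrarily small neighborhoods
with preconnected preimage, then the corestriction `ψ : M → range ψ` is open. -/
theorem stmt11 {M E : Type*} [TopologicalSpace M]
    [AddCommGroup E] [Module ℝ E] [TopologicalSpace E]
    [IsTopologicalAddGroup E] [ContinuousSMul ℝ E]
    (ψ : M → E) (C : M → Set E)
    (hcont : Continuous ψ) (hC : IsLocalConeStructure ψ C)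
    (hfib : ∀ u : E, IsPreconnected (ψ ⁻¹' {u}))
    (hsmall : ∀ u ∈ Set.range ψ, ∀ W ∈ 𝓝 u,
      ∃ B ∈ 𝓝 u, B ⊆ W ∧ IsPreconnected (ψ ⁻¹' B)) :
    IsOpenMap (Set.rangeFactorization ψ) :=
  stmt11_general ψ C hcont hC hfib hsmall
end

section
/- Let M be a topological space, E a finite-dimensional real normed vector space, and ψ : M → E a continuous convex map admitting a local cone structure C such that in addition each C(x) is convex and has ψ(x) as a vertex, i.e., ψ(x) + t·(c − ψ(x)) ∈ C(x) for every c ∈ C(x) and every t ≥ 0. Then for every x ∈ M: (a) C(x) = {ψ(x) + t·(w − ψ(x)) : t ≥ 0, w ∈ range ψ}, so C(x) is the smallest cone with vertex ψ(x) containing the range of ψ; and (b) the range of ψ is a neighborhood of ψ(x) in C(x) with its subspace topology. -/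
open Topology

/-- Let `ψ : M → E` be a continuous convex map into a
finite-dimensional real normed vector space admitting a local cone structure whose
cones `C x` are convex with vertex `ψ x`. Then for every `x`: (a) `C x` is the cone
with vertex `ψ x` spanned by the range of `ψ`; and (b) the range of `ψ` is a
neighborhood of `ψ x` in `C x` with its subspace topology. -/
theorem stmt13 {M E : Type*} [TopologicalSpace M]
    [NormedAddCommGroup E] [NormedSpace ℝ E] [FiniteDimensional ℝ E]
    (ψ : M → E) (C : M → Set E)
    (hcont : Continuous ψ) (hC : IsLocalConeStructure ψ C)
    (hconvexMap : ∀ u ∈ Set.range ψ, ∀ v ∈ Set.range ψ,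
        IsConnected (ψ ⁻¹' segment ℝ u v))
    (hCconv : ∀ x : M, Convex ℝ (C x))
    (hvertex : ∀ x : M, ∀ c ∈ C x, ∀ t : ℝ, 0 ≤ t → ψ x + t • (c - ψ x) ∈ C x) :
    ∀ x : M,
      (C x = {z : E | ∃ t : ℝ, 0 ≤ t ∧ ∃ w ∈ Set.range ψ,
          z = ψ x + t • (w - ψ x)}) ∧
      Set.range ψ ∈ 𝓝[C x] (ψ x) := by
  -- `C` is constant on fibers, since fibers are connected by convexity of `ψ`.
  have hfiber : ∀ a b : M, ψ a = ψ b → C a = C b := by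
    intro a b hab
    apply hC.fiberCompat a b
    have hconn : IsConnected (ψ ⁻¹' {ψ a}) := by
      have := hconvexMap (ψ a) ⟨a, rfl⟩ (ψ a) ⟨a, rfl⟩
      simpa [segment_same] using this
    have h2 : connectedComponentIn (ψ ⁻¹' {ψ a}) a = ψ ⁻¹' {ψ a} :=
      hconn.isPreconnected.connectedComponentIn (show a ∈ _ from rfl)
    rw [h2]
    simp [hab.symm]
  have hself : ∀ z : M, ψ z ∈ C z := by
    intro z
    obtain ⟨U, hUo, hzU, -, hsub, -⟩ := hC.locally z Set.univ Filter.univ_mem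
    exact hsub ⟨z, hzU, rfl⟩
  -- Step A: the range of `ψ` is contained in every `C x`.
  have hrange : ∀ x : M, ∀ w ∈ Set.range ψ, w ∈ C x := by
    intro x w hw
    obtain ⟨y, rfl⟩ := hw
    by_contra hwK
    have hvw : ψ y ≠ ψ x := fun h => hwK (h ▸ hself x)
    have hS : IsConnected (ψ ⁻¹' segment ℝ (ψ x) (ψ y)) :=
      hconvexMap (ψ x) ⟨x, rfl⟩ (ψ y) ⟨y, rfl⟩
    set S := ψ ⁻¹' segment ℝ (ψ x) (ψ y) with hSdef
    have hU : ∀ z : M, ψ z = ψ x → ∃ U : Set M, IsOpen U ∧ z ∈ U ∧ ψ '' U ⊆ C x := by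
      intro z hz
      obtain ⟨U, hUo, hzU, -, hsub, -⟩ := hC.locally z Set.univ Filter.univ_mem
      refine ⟨U, hUo, hzU, ?_⟩
      rwa [hfiber z x (by rw [hz])] at hsub
    choose! U hUo hzU hUsub using hU
    set O₁ : Set M := ⋃ z ∈ {z : M | ψ z = ψ x}, U z with hO₁def
    set O₂ : Set M := ψ ⁻¹' ({ψ x}ᶜ) with hO₂def
    have hO₁ : IsOpen O₁ := isOpen_biUnion fun z hz => hUo z hz
    have hO₂ : IsOpen O₂ := (isClosed_singleton.preimage hcont).isOpen_compl
    have hcover : S ⊆ O₁ ∪ O₂ := by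
      intro z hz
      by_cases h : ψ z = ψ x
      · exact Or.inl (Set.mem_biUnion h (hzU z h))
      · exact Or.inr h
    have hkey : ∀ z, z ∈ S → z ∈ O₁ → ψ z = ψ x := by
      intro z hzS hzO
      obtain ⟨z₀, hz₀, hzU₀⟩ := Set.mem_iUnion₂.mp hzO
      have hzC : ψ z ∈ C x := hUsub z₀ hz₀ ⟨z, hzU₀, rfl⟩
      have hzseg : ψ z ∈ segment ℝ (ψ x) (ψ y) := hzS
      rw [segment_eq_image'] at hzseg
      obtain ⟨s, ⟨hs0, hs1⟩, hseg⟩ := hzseg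
      simp only at hseg
      by_contra hne
      have hs : s ≠ 0 := by
        rintro rfl
        simp at hseg
        exact hne hseg.symm
      apply hwK
      have hyeq : ψ y = ψ x + s⁻¹ • (ψ z - ψ x) := by
        have h1 : ψ z - ψ x = s • (ψ y - ψ x) := by
          rw [← hseg]; module
        rw [h1, inv_smul_smul₀ hs]
        abel
      rw [hyeq]
      exact hvertex x (ψ z) hzC s⁻¹ (inv_nonneg.2 hs0)
    have hne1 : (S ∩ O₁).Nonempty :=
      ⟨x, left_mem_segment ℝ (ψ x) (ψ y), Set.mem_biUnion rfl (hzU x rfl)⟩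
    have hne2 : (S ∩ O₂).Nonempty :=
      ⟨y, right_mem_segment ℝ (ψ x) (ψ y), hvw⟩
    obtain ⟨z, hzS, hz1, hz2⟩ := hS.isPreconnected O₁ O₂ hO₁ hO₂ hcover hne1 hne2
    exact hz2 (hkey z hzS hz1)
  intro x
  obtain ⟨U, hUo, hxU, -, hUsub, hUnbhd⟩ := hC.locally x Set.univ Filter.univ_mem
  constructor
  · ext z
    constructor
    · intro hz
      obtain ⟨O, hOo, hxO, hOsub⟩ := mem_nhdsWithin.mp hUnbhd
      -- find a small `ε > 0` with `ψ x + ε • (z - ψ x) ∈ O`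
      have hf : Continuous fun t : ℝ => ψ x + t • (z - ψ x) := by continuity
      have htend : Filter.Tendsto (fun t : ℝ => ψ x + t • (z - ψ x)) (𝓝[>] 0)
          (𝓝 (ψ x)) := by
        have := (hf.tendsto 0).mono_left (nhdsWithin_le_nhds (s := Set.Ioi (0:ℝ)))
        simpa using this
      have hev : ∀ᶠ t in 𝓝[>] (0:ℝ), ψ x + t • (z - ψ x) ∈ O :=
        htend.eventually (hOo.mem_nhds hxO)
      obtain ⟨ε, hεO, hε⟩ := (hev.and self_mem_nhdsWithin).exists
      have hεpos : (0:ℝ) < ε := hε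
      have hεC : ψ x + ε • (z - ψ x) ∈ C x := hvertex x z hz ε hεpos.le
      have hεU : ψ x + ε • (z - ψ x) ∈ ψ '' U := hOsub ⟨hεO, hεC⟩
      refine ⟨ε⁻¹, (inv_nonneg.2 hεpos.le), ψ x + ε • (z - ψ x),
        (Set.image_subset_range ψ U) hεU, ?_⟩
      have : (ψ x + ε • (z - ψ x)) - ψ x = ε • (z - ψ x) := by abel
      rw [this, inv_smul_smul₀ hεpos.ne']
      abel
    · rintro ⟨t, ht, w, hw, rfl⟩
      exact hvertex x w (hrange x w hw) t ht
  · exact Filter.mem_of_superset hUnbhd (Set.image_subset_range ψ U)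
end
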